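/- Let mu, nu be probability measures on [0,1]. Then |H(mu) - H(nu)| <= h2(d(mu,nu)/2) <= (1/ln 2)*sqrt(d(mu,nu))*sqrt(2 - d(mu,nu)), where H(a) = integral of h2((1-z)/2) da(z) is the entropy functional, h2 the binary entropy, and d the Wasserstein-1 distance. -/

import Mathlib

/-!
Write `f z = h₂((1 - z) / 2)`. Its negative derivative is `artanh / log 2`, which is nonnegative
and increasing on `[0, 1)`, and `f z = ∫_z^1 artanh / log 2` since `f 1 = 0`. Fubini turns
`H(μ)` into `∫_0^1 (artanh t / log 2) F_μ(t) dt`, so `|H(μ) - H(ν)|` is at most the integral of the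
increasing weight against `D = |F_μ - F_ν|`, where `0 ≤ D ≤ 1` and `∫_0^1 D = d(μ, ν) = d`. Among
such `D`, that integral is largest for the indicator of `[1 - d, 1]`, giving `f (1 - d) = h₂(d/2)`.
The second inequality is `-log x ≤ (1 - x) / √x` (that is, `y ≤ sinh y` at `y = -log √x`) applied
to both terms of the binary entropy.
-/

open MeasureTheory

/-- The binary entropy function. -/
noncomputable def h2 (x : ℝ) : ℝ := -(x * Real.logb 2 x) - (1 - x) * Real.logb 2 (1 - x)

/-- Cumulative distribution function of a measure on `ℝ`. -/
noncomputable def cdf (μ : Measure ℝ) (x : ℝ) : ℝ := (μ (Set.Iic x)).toReal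

/-- The Wasserstein-1 distance between measures on `[0,1]`,
expressed as the `L¹` distance of their CDFs. -/
noncomputable def W1 (μ ν : Measure ℝ) : ℝ := ∫ x in (0:ℝ)..1, |cdf μ x - cdf ν x|

/-- The entropy functional of a `|D|`-distribution. -/
noncomputable def entF (μ : Measure ℝ) : ℝ := ∫ z, h2 ((1 - z)/2) ∂μ


open Real Set intervalIntegral

lemma h2_eq_binEntropy_div_log_two (x : ℝ) : h2 x = binEntropy x / log 2 := by
  simp only [h2, binEntropy, logb, log_inv]
  ring

lemma hasDerivAt_neg_binEntropy_one_sub_div_two {z : ℝ} (hz : z ∈ Ioo (-1) 1) :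
    HasDerivAt (fun z => -binEntropy ((1 - z) / 2)) (artanh z) z := by
  obtain ⟨hz₀, hz₁⟩ := hz
  have hinner : HasDerivAt (fun z : ℝ => (1 - z) / 2) (-1 / 2) z :=
    ((hasDerivAt_id z).const_sub 1).div_const 2
  refine ((hasDerivAt_binEntropy (p := (1 - z) / 2) (by linarith) (by linarith)).comp z
    hinner).fun_neg.congr_deriv ?_
  rw [artanh_eq_half_log ⟨hz₀.le, hz₁.le⟩, ← log_div (by linarith) (by linarith)]
  field_simp
  ring_nf

lemma intervalIntegrable_artanh : IntervalIntegrable artanh volume 0 1 := by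
  refine intervalIntegrable_deriv_of_nonneg (g := fun z => -binEntropy ((1 - z) / 2))
    (by fun_prop) (fun x hx => ?_) (fun x hx => ?_) <;> simp only [zero_le_one, min_eq_left,
      max_eq_right, mem_Ioo] at hx
  · exact hasDerivAt_neg_binEntropy_one_sub_div_two ⟨by linarith, hx.2⟩
  · exact artanh_nonneg hx.1.le

lemma integral_artanh_eq_binEntropy {z : ℝ} (hz : z ∈ Icc 0 1) :
    ∫ t in z..1, artanh t = binEntropy ((1 - z) / 2) := by
  have hint : IntervalIntegrable artanh volume z 1 := intervalIntegrable_artanh.mono_set <| by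
    rw [uIcc_of_le hz.2, uIcc_of_le zero_le_one]
    exact Icc_subset_Icc_left hz.1
  rw [integral_eq_sub_of_hasDerivAt_of_le hz.2 (by fun_prop)
    (fun x hx => hasDerivAt_neg_binEntropy_one_sub_div_two ⟨by linarith [hz.1, hx.1], hx.2⟩) hint]
  simp

lemma cdf_nonneg (μ : Measure ℝ) (x : ℝ) : 0 ≤ cdf μ x := ENNReal.toReal_nonneg

lemma cdf_le_one (μ : Measure ℝ) [IsProbabilityMeasure μ] (x : ℝ) : cdf μ x ≤ 1 :=
  measureReal_le_one

lemma monotone_cdf (μ : Measure ℝ) [IsFiniteMeasure μ] : Monotone (cdf μ) :=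
  fun _ _ hxy => measureReal_mono (Iic_subset_Iic.2 hxy)

lemma abs_cdf_sub_cdf_le_one (μ ν : Measure ℝ) [IsProbabilityMeasure μ]
    [IsProbabilityMeasure ν] (x : ℝ) : |cdf μ x - cdf ν x| ≤ 1 :=
  abs_sub_le_iff.2 ⟨by linarith [cdf_le_one μ x, cdf_nonneg ν x],
    by linarith [cdf_le_one ν x, cdf_nonneg μ x]⟩

lemma IntervalIntegrable.mul_bdd {f g : ℝ → ℝ} {a b C : ℝ} (hf : IntervalIntegrable f volume a b)
    (hg : IntervalIntegrable g volume a b) (hC : ∀ t, ‖g t‖ ≤ C) :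
    IntervalIntegrable (fun t => f t * g t) volume a b :=
  ⟨hf.1.mul_bdd hg.1.1 (ae_of_all _ hC), hf.2.mul_bdd hg.2.1 (ae_of_all _ hC)⟩

theorem integral_intervalIntegral_eq_intervalIntegral_mul_cdf (μ : Measure ℝ) [IsFiniteMeasure μ]
    {a b : ℝ} (hab : a ≤ b) (hμ : ∀ᵐ z ∂μ, z ∈ Icc a b) {g : ℝ → ℝ}
    (hg : IntervalIntegrable g volume a b) :
    ∫ z, (∫ t in z..b, g t) ∂μ = ∫ t in a..b, g t * cdf μ t := by
  set ν := volume.restrict (Icc a b)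
  let k : ℝ → ℝ → ℝ := fun z t => (Ici z).indicator g t
  have hk : Integrable (Function.uncurry k) (μ.prod ν) :=
    (((intervalIntegrable_iff_integrableOn_Icc_of_le hab).1 hg).comp_snd μ).indicator
      (measurableSet_le measurable_fst measurable_snd)
  have inner_left : ∀ᵐ z ∂μ, ∫ t, k z t ∂ν = ∫ t in z..b, g t := by
    filter_upwards [hμ] with z hz
    have hset : Ici z ∩ Icc a b = Icc z b := by
      ext t
      simp only [mem_inter_iff, mem_Ici, mem_Icc]
      exact ⟨fun h => ⟨h.1, h.2.2⟩, fun h => ⟨h.1, hz.1.trans h.1, h.2⟩⟩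
    rw [MeasureTheory.integral_indicator measurableSet_Ici,
      Measure.restrict_restrict measurableSet_Ici, hset, integral_Icc_eq_integral_Ioc,
      integral_of_le hz.2]
  have inner_right : ∀ t, ∫ z, k z t ∂μ = g t * cdf μ t := fun t => by
    have : (fun z => k z t) = (Iic t).indicator fun _ => g t := by
      ext z; simp [k, indicator_apply]
    rw [this, integral_indicator_const _ measurableSet_Iic, smul_eq_mul, mul_comm, cdf,
      measureReal_def]
  calc ∫ z, (∫ t in z..b, g t) ∂μ = ∫ z, ∫ t, k z t ∂ν ∂μ :=
        integral_congr_ae (inner_left.mono fun _ h => h.symm)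
    _ = ∫ t, ∫ z, k z t ∂μ ∂ν := integral_integral_swap hk
    _ = ∫ t in a..b, g t * cdf μ t := by
        simp_rw [inner_right]
        rw [integral_of_le hab, integral_Icc_eq_integral_Ioc]

theorem intervalIntegral_mul_le_of_monotoneOn {g D : ℝ → ℝ} {a b c : ℝ} (hac : a ≤ c)
    (hcb : c ≤ b) (hg : MonotoneOn g (Ico a b)) (hgi : IntervalIntegrable g volume a b)
    (hDi : IntervalIntegrable D volume a b) (hD₀ : ∀ t, 0 ≤ D t) (hD₁ : ∀ t, D t ≤ 1)
    (hDint : ∫ t in a..b, D t = b - c) :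
    ∫ t in a..b, g t * D t ≤ ∫ t in c..b, g t := by
  have hab := hac.trans hcb
  have hgD : IntervalIntegrable (fun t => g t * D t) volume a b :=
    hgi.mul_bdd hDi fun t => by rw [norm_of_nonneg (hD₀ t)]; exact hD₁ t
  rcases hcb.eq_or_lt with rfl | hcb
  · have hD : D =ᵐ[volume.restrict (Ioc a c)] 0 :=
      (integral_eq_zero_iff_of_le_of_nonneg_ae hac (ae_of_all _ hD₀) hDi).1 (by simpa using hDint)
    rw [integral_same, integral_of_le hac, integral_eq_zero_of_ae]
    filter_upwards [hD] with t ht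
    simp [ht]
  -- Compare with the constant `g c`: on `[a, c]` we have `(g - g c) D ≤ 0`, on `[c, b)` we have
  -- `(g - g c) (D - 1) ≤ 0`, and the two comparison terms cancel since `∫ D = b - c`.
  set k := g c
  have hc : c ∈ uIcc a b := by rw [uIcc_of_le hab]; exact ⟨hac, hcb.le⟩
  set φ := fun t => g t * D t - k * D t
  have hφ : IntervalIntegrable φ volume a b := hgD.sub (hDi.const_mul k)
  have hleft : ∫ t in a..c, φ t ≤ ∫ _ in a..c, (0 : ℝ) :=
    integral_mono_on_of_le_Ioo hac (hφ.mono_set (uIcc_subset_uIcc_left hc))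
      intervalIntegrable_const fun t ht => by
        have : g t ≤ k := hg ⟨ht.1.le, ht.2.trans hcb⟩ ⟨hac, hcb⟩ ht.2.le
        nlinarith [hD₀ t]
  have hright : ∫ t in c..b, φ t ≤ ∫ t in c..b, (g t - k) :=
    integral_mono_on_of_le_Ioo hcb.le (hφ.mono_set (uIcc_subset_uIcc_right hc))
      ((hgi.mono_set (uIcc_subset_uIcc_right hc)).sub intervalIntegrable_const) fun t ht => by
        have : k ≤ g t := hg ⟨hac, hcb⟩ ⟨hac.trans ht.1.le, ht.2⟩ ht.1.le
        nlinarith [hD₁ t]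
  have hsplit := integral_add_adjacent_intervals (hφ.mono_set (uIcc_subset_uIcc_left hc))
    (hφ.mono_set (uIcc_subset_uIcc_right hc))
  have hφint : ∫ t in a..b, φ t = (∫ t in a..b, g t * D t) - k * (b - c) := by
    rw [integral_sub hgD (hDi.const_mul k), intervalIntegral.integral_const_mul, hDint]
  rw [integral_sub (hgi.mono_set (uIcc_subset_uIcc_right hc)) intervalIntegrable_const,
    intervalIntegral.integral_const, smul_eq_mul] at hright
  rw [intervalIntegral.integral_zero] at hleft
  linarith

lemma negMulLog_le_sqrt_mul_one_sub {x : ℝ} (hx₀ : 0 ≤ x) (hx₁ : x ≤ 1) :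
    negMulLog x ≤ √x * (1 - x) := by
  rcases hx₀.eq_or_lt with rfl | hx₀
  · simp
  set s := √x
  have hs : 0 < s := sqrt_pos.2 hx₀
  have hx : x = s ^ 2 := (sq_sqrt hx₀.le).symm
  have hsinh : log s⁻¹ ≤ (s⁻¹ - s) / 2 := by
    have := self_le_sinh_iff.2 (log_nonneg (one_le_inv₀ hs |>.2 (sqrt_le_one.2 hx₁)))
    rwa [sinh_log (inv_pos.2 hs), inv_inv] at this
  rw [log_inv] at hsinh
  have : -log s * s ^ 2 ≤ (s⁻¹ - s) / 2 * s ^ 2 := by gcongr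
  rw [negMulLog, hx, log_pow]
  field_simp at this ⊢
  push_cast
  linarith

lemma binEntropy_le_two_sqrt {x : ℝ} (hx₀ : 0 ≤ x) (hx₁ : x ≤ 1) :
    binEntropy x ≤ 2 * √(x * (1 - x)) := by
  have h₁ := negMulLog_le_sqrt_mul_one_sub hx₀ hx₁
  have h₂ := negMulLog_le_sqrt_mul_one_sub (x := 1 - x) (by linarith) (by linarith)
  rw [binEntropy_eq_negMulLog_add_negMulLog_one_sub, sqrt_mul hx₀]
  set a := √x
  set b := √(1 - x)
  have ha : a ^ 2 = x := sq_sqrt hx₀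
  have hb : b ^ 2 = 1 - x := sq_sqrt (by linarith)
  have ha₁ : a ≤ 1 := sqrt_le_one.2 hx₁
  have hb₁ : b ≤ 1 := sqrt_le_one.2 (by linarith)
  -- `a b² + b a² = a b (a + b) ≤ 2 a b`
  nlinarith [mul_nonneg (sqrt_nonneg x) (sqrt_nonneg (1 - x))]

lemma intervalIntegrable_abs_cdf_sub_cdf (μ ν : Measure ℝ) [IsFiniteMeasure μ] [IsFiniteMeasure ν]
    (a b : ℝ) :
    IntervalIntegrable (fun t => |cdf μ t - cdf ν t|) volume a b :=
  ((monotone_cdf μ).intervalIntegrable.sub (monotone_cdf ν).intervalIntegrable).abs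

lemma W1_nonneg (μ ν : Measure ℝ) : 0 ≤ W1 μ ν :=
  integral_nonneg zero_le_one fun _ _ => abs_nonneg _

lemma W1_le_one (μ ν : Measure ℝ) [IsProbabilityMeasure μ] [IsProbabilityMeasure ν] :
    W1 μ ν ≤ 1 := by
  calc W1 μ ν ≤ ∫ _ in (0 : ℝ)..1, (1 : ℝ) :=
        integral_mono_on zero_le_one (intervalIntegrable_abs_cdf_sub_cdf μ ν 0 1)
          intervalIntegrable_const fun t _ => abs_cdf_sub_cdf_le_one μ ν t
    _ = 1 := by simp

lemma integral_binEntropy_eq_intervalIntegral_artanh_mul_cdf (μ : Measure ℝ)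
    [IsFiniteMeasure μ] (hμ : ∀ᵐ z ∂μ, z ∈ Icc 0 1) :
    ∫ z, binEntropy ((1 - z) / 2) ∂μ = ∫ t in (0 : ℝ)..1, artanh t * cdf μ t := by
  rw [← integral_intervalIntegral_eq_intervalIntegral_mul_cdf μ zero_le_one hμ
    intervalIntegrable_artanh]
  refine integral_congr_ae ?_
  filter_upwards [hμ] with z hz
  exact (integral_artanh_eq_binEntropy hz).symm

theorem abs_sub_integral_binEntropy_le (μ ν : Measure ℝ) [IsProbabilityMeasure μ]
    [IsProbabilityMeasure ν] (hμ : ∀ᵐ z ∂μ, z ∈ Icc 0 1) (hν : ∀ᵐ z ∂ν, z ∈ Icc 0 1) :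
    |∫ z, binEntropy ((1 - z) / 2) ∂μ - ∫ z, binEntropy ((1 - z) / 2) ∂ν| ≤
      binEntropy (W1 μ ν / 2) := by
  have hcdf (μ : Measure ℝ) [IsProbabilityMeasure μ] :
      IntervalIntegrable (fun t => artanh t * cdf μ t) volume 0 1 :=
    intervalIntegrable_artanh.mul_bdd (monotone_cdf μ).intervalIntegrable fun t => by
      rw [norm_of_nonneg (cdf_nonneg μ t)]; exact cdf_le_one μ t
  calc |∫ z, binEntropy ((1 - z) / 2) ∂μ - ∫ z, binEntropy ((1 - z) / 2) ∂ν|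
      = |∫ t in (0 : ℝ)..1, artanh t * (cdf μ t - cdf ν t)| := by
        simp_rw [integral_binEntropy_eq_intervalIntegral_artanh_mul_cdf μ hμ,
          integral_binEntropy_eq_intervalIntegral_artanh_mul_cdf ν hν, mul_sub]
        rw [integral_sub (hcdf μ) (hcdf ν)]
    _ ≤ ∫ t in (0 : ℝ)..1, artanh t * |cdf μ t - cdf ν t| := by
        refine (abs_integral_le_integral_abs zero_le_one).trans_eq (integral_congr fun t ht => ?_)
        rw [uIcc_of_le zero_le_one] at ht
        simp only [abs_mul, abs_of_nonneg (artanh_nonneg ht.1)]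
    _ ≤ ∫ t in (1 - W1 μ ν)..1, artanh t :=
        intervalIntegral_mul_le_of_monotoneOn (by linarith [W1_le_one μ ν])
          (by linarith [W1_nonneg μ ν])
          (fun x hx y hy hxy => artanh_le_artanh (by linarith [hx.1]) hy.2 hxy)
          intervalIntegrable_artanh (intervalIntegrable_abs_cdf_sub_cdf μ ν 0 1)
          (fun _ => abs_nonneg _) (abs_cdf_sub_cdf_le_one μ ν) (by rw [W1]; ring)
    _ = binEntropy (W1 μ ν / 2) := by
        rw [integral_artanh_eq_binEntropy
          ⟨by linarith [W1_le_one μ ν], by linarith [W1_nonneg μ ν]⟩]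
        ring_nf

/-- The Wasserstein distance bounds the difference of entropies:
`|H(μ) - H(ν)| ≤ h2(d(μ,ν)/2) ≤ (1/ln 2) √d(μ,ν) √(2 - d(μ,ν))`. -/
theorem wasserstein_bounds_entropy (μ ν : Measure ℝ)
    [IsProbabilityMeasure μ] [IsProbabilityMeasure ν]
    (hμ : μ (Set.Icc (0:ℝ) 1)ᶜ = 0) (hν : ν (Set.Icc (0:ℝ) 1)ᶜ = 0) :
    |entF μ - entF ν| ≤ h2 (W1 μ ν / 2) ∧
    h2 (W1 μ ν / 2) ≤ (1 / Real.log 2) * Real.sqrt (W1 μ ν) * Real.sqrt (2 - W1 μ ν) := by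
  have hlog : 0 < log 2 := log_pos one_lt_two
  have hd₀ := W1_nonneg μ ν
  have hd₁ := W1_le_one μ ν
  simp only [entF, h2_eq_binEntropy_div_log_two, MeasureTheory.integral_div]
  constructor
  · rw [← sub_div, abs_div, abs_of_pos hlog]
    gcongr
    exact abs_sub_integral_binEntropy_le μ ν (ae_iff.2 hμ) (ae_iff.2 hν)
  · calc binEntropy (W1 μ ν / 2) / log 2
        ≤ 2 * √(W1 μ ν / 2 * (1 - W1 μ ν / 2)) / log 2 := by
          gcongr
          exact binEntropy_le_two_sqrt (by linarith) (by linarith)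
      _ = 1 / log 2 * √(W1 μ ν) * √(2 - W1 μ ν) := by
          rw [show W1 μ ν / 2 * (1 - W1 μ ν / 2) = W1 μ ν * (2 - W1 μ ν) / 2 ^ 2 by ring,
            sqrt_div' _ (by positivity), sqrt_sq zero_le_two, sqrt_mul hd₀]
          ring
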